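/- Let h : R^m → R be Lipschitz continuous, with distribution function H_F having bounded density h_F, and let J be a bounded function with J(t) = 0 for t outside [α,β] ⊂ (0,1) such that ∫_{−∞}^∞ |J(H_F(y))| dy < ∞, and let a_1,…,a_d be constants, p_1,…,p_d ∈ (0,1) with h_F(H_F^{−1}(p_i)) > 0. Then the kernel A(x_1,…,x_m) = −∫_{−∞}^∞ (1_{[h(x_1,…,x_m) ≤ y]} − H_F(y)) J(H_F(y)) dy + Σ_{i=1}^d a_i (p_i − 1_{[h(x_1,…,x_m) ≤ H_F^{−1}(p_i)]}) / h_F(H_F^{−1}(p_i)) satisfies the L_2-variation condition: there exist L' and ε_0 > 0 such that for all ε ∈ (0,ε_0), E( sup_{‖(x_1,…,x_m)−(X_1',…,X_m')‖ ≤ ε} |A(x_1,…,x_m) − A(X_1',…,X_m')| )² ≤ L'ε. -/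

import Mathlib

open MeasureTheory ProbabilityTheory Filter Topology

attribute [local instance 10] Classical.propDecidable

noncomputable section

/-- Euclidean distance on `Fin m → ℝ`. -/
def eudist {m : ℕ} (x y : Fin m → ℝ) : ℝ := Real.sqrt (∑ i, (x i - y i) ^ 2)

/-- The product measure `ν^⊗m`, the law of `m` independent copies. -/
def piNu (m : ℕ) (ν : Measure ℝ) : Measure (Fin m → ℝ) := Measure.pi fun _ => ν

/-- Generalized inverse (quantile function) of a distribution function. -/
def qf (F : ℝ → ℝ) (t : ℝ) : ℝ := sInf {x : ℝ | t ≤ F x}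

/-- The U-distribution function `H_F(t) = P(h(Y_1,…,Y_m) ≤ t)` for iid `Y_i` with law `ν`. -/
def HFk (m : ℕ) (h : (Fin m → ℝ) → ℝ) (ν : Measure ℝ) (t : ℝ) : ℝ :=
  ((piNu m ν) {y | h y ≤ t}).toReal

/-- The kernel `A` appearing in the linearization of a GL-statistic. -/
def Aker (m : ℕ) (h : (Fin m → ℝ) → ℝ) (ν : Measure ℝ) (J : ℝ → ℝ)
    (d : ℕ) (aa pp : Fin d → ℝ) (hF : ℝ → ℝ) (x : Fin m → ℝ) : ℝ :=
  -(∫ y : ℝ, ((if h x ≤ y then (1 : ℝ) else 0) - HFk m h ν y) * J (HFk m h ν y)) +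
    ∑ i, aa i * (pp i - if h x ≤ qf (HFk m h ν) (pp i) then 1 else 0)
      / hF (qf (HFk m h ν) (pp i))

/-! If `eudist x y ≤ ε` then `|h x - h y| ≤ Kε`. The integral part of `A` then changes by the
integral of `J ∘ H_F` between `h x` and `h y`, hence by at most `M K ε`, while the `i`-th quantile
term changes only when `h y` lies within `Kε` of `H_F⁻¹(pᵢ)`, an event of probability at most
`3 D K ε` by the density bound. So the supremum is at most `a + B y` with `a = O(ε)` and `B`
bounded with mean `O(ε)`, and `E (a + B)² ≤ a² + (2a + sup B) E B = O(ε)`. -/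

open Set

lemma eudist_eq_dist {m : ℕ} (x y : Fin m → ℝ) :
    eudist x y = dist (WithLp.toLp 2 x : EuclideanSpace ℝ (Fin m)) (WithLp.toLp 2 y) := by
  simp [eudist, EuclideanSpace.dist_eq, Real.dist_eq, sq_abs]

lemma continuous_of_abs_sub_le_mul_eudist {m : ℕ} {h : (Fin m → ℝ) → ℝ} {K : ℝ}
    (hLip : ∀ x y, |h x - h y| ≤ K * eudist x y) : Continuous h := by
  have hg : LipschitzWith K.toNNReal fun z : EuclideanSpace ℝ (Fin m) => h z.ofLp :=
    LipschitzWith.of_dist_le' fun x y => by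
      simpa [Real.dist_eq, eudist_eq_dist] using hLip x.ofLp y.ofLp
  exact hg.continuous.comp (PiLp.continuous_toLp 2 _)

lemma integral_step_sub_integral_step {φ ψ : ℝ → ℝ} (hψ : Integrable ψ)
    (hφψ : Integrable fun t => φ t * ψ t) (s s' : ℝ) :
    (∫ t, ((if s ≤ t then 1 else 0) - φ t) * ψ t) -
      ∫ t, ((if s' ≤ t then 1 else 0) - φ t) * ψ t = ∫ t in s..s', ψ t := by
  have hstep : ∀ s : ℝ, ∫ t, ((if s ≤ t then 1 else 0) - φ t) * ψ t =
      (∫ t in Ioi s, ψ t) - ∫ t, φ t * ψ t := by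
    intro s
    have hfun : (fun t => ((if s ≤ t then 1 else 0) - φ t) * ψ t) =
        fun t => (Ici s).indicator ψ t - φ t * ψ t := by
      ext t
      by_cases hst : s ≤ t <;> simp [hst, sub_mul]
    rw [hfun, integral_sub (hψ.indicator measurableSet_Ici) hφψ,
      integral_indicator measurableSet_Ici, integral_Ici_eq_integral_Ioi]
  rw [hstep, hstep, sub_sub_sub_cancel_right,
    intervalIntegral.integral_Ioi_sub_Ioi' hψ.integrableOn hψ.integrableOn]

lemma abs_integral_step_sub_integral_step_le {φ ψ : ℝ → ℝ} {M : ℝ} (hψ : Integrable ψ)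
    (hφψ : Integrable fun t => φ t * ψ t) (hM : ∀ t, |ψ t| ≤ M) (s s' : ℝ) :
    |(∫ t, ((if s ≤ t then 1 else 0) - φ t) * ψ t) -
      ∫ t, ((if s' ≤ t then 1 else 0) - φ t) * ψ t| ≤ M * |s - s'| := by
  rw [integral_step_sub_integral_step hψ hφψ, abs_sub_comm s s']
  exact intervalIntegral.norm_integral_le_of_norm_le_const fun t _ =>
    (Real.norm_eq_abs _).trans_le (hM t)

lemma abs_step_sub_step_le {s s' q r : ℝ} (h : |s - s'| ≤ r) :
    |(if s ≤ q then (1 : ℝ) else 0) - (if s' ≤ q then 1 else 0)| ≤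
      if |s - q| ≤ r then 1 else 0 := by
  rw [abs_le] at h
  by_cases hq : |s - q| ≤ r
  · rw [if_pos hq]
    split_ifs <;> norm_num
  · have hiff : s ≤ q ↔ s' ≤ q := by
      rw [not_le, lt_abs] at hq
      constructor <;> intro <;> rcases hq with hq | hq <;> linarith
    simp [hiff, hq]

lemma measureReal_abs_sub_le_le_sub {Ω : Type*} [MeasurableSpace Ω] (μ : Measure Ω)
    [IsFiniteMeasure μ] {f : Ω → ℝ} (hf : Measurable f) {q r a : ℝ} (hr : 0 ≤ r) (ha : a < q - r) :
    μ.real {x | |f x - q| ≤ r} ≤ μ.real {x | f x ≤ q + r} - μ.real {x | f x ≤ a} := by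
  have hsub : {x | f x ≤ a} ⊆ {x | f x ≤ q + r} := fun x hx => by
    simp only [mem_ofPred_eq] at hx ⊢
    linarith
  rw [← measureReal_sdiff hsub (measurableSet_le hf measurable_const)]
  refine measureReal_mono fun x hx => ?_
  simp only [mem_ofPred_eq, Set.mem_sdiff, not_le, abs_le] at hx ⊢
  constructor <;> linarith [hx.1, hx.2]

lemma sub_le_mul_of_eq_setIntegral_Iic {F g : ℝ → ℝ} {D a b : ℝ}
    (hF : ∀ t, F t = ∫ x in Iic t, g x) (hg : ∀ x, g x ≤ D) (hD : 0 ≤ D) (hFa : 0 ≤ F a)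
    (hab : a ≤ b) : F b - F a ≤ D * (b - a) := by
  by_cases hint : IntegrableOn g (Iic b)
  · rw [hF b, hF a,
      intervalIntegral.integral_Iic_sub_Iic (hint.mono_set (Iic_subset_Iic.2 hab)) hint]
    calc ∫ x in a..b, g x ≤ ∫ _ in a..b, D :=
          intervalIntegral.integral_mono_on hab
            ((intervalIntegrable_iff_integrableOn_Icc_of_le hab).2
              (hint.mono_set Icc_subset_Iic_self))
            intervalIntegrable_const fun x _ => hg x
      _ = D * (b - a) := by simp [mul_comm]
  -- junk case: the integral over `Iic b` is `0`, so `F b - F a = -F a ≤ 0`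
  · rw [hF b, integral_undef hint]
    linarith [mul_nonneg hD (sub_nonneg.2 hab)]

lemma integral_sq_le_of_le_add_sum_indicator {Ω ι : Type*} [MeasurableSpace Ω] [Fintype ι]
    {μ : Measure Ω} [IsProbabilityMeasure μ] {S : Ω → ℝ} {c : ι → ℝ} {A : ι → Set Ω}
    {a δ : ℝ} (ha : 0 ≤ a) (hc : ∀ i, 0 ≤ c i) (hA : ∀ i, MeasurableSet (A i))
    (hAδ : ∀ i, μ.real (A i) ≤ δ) (hS0 : ∀ y, 0 ≤ S y)
    (hS : ∀ y, S y ≤ a + ∑ i, c i * (A i).indicator 1 y) :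
    ∫ y, S y ^ 2 ∂μ ≤ a ^ 2 + (2 * a + ∑ i, c i) * ((∑ i, c i) * δ) := by
  set B : Ω → ℝ := fun y => ∑ i, c i * (A i).indicator 1 y
  set C := ∑ i, c i
  have hB0 : ∀ y, 0 ≤ B y := fun y =>
    Finset.sum_nonneg fun i _ => mul_nonneg (hc i) (indicator_nonneg (fun _ _ => zero_le_one) y)
  have hBC : ∀ y, B y ≤ C := fun y =>
    Finset.sum_le_sum fun i _ =>
      mul_le_of_le_one_right (hc i) (indicator_le_self' (fun _ _ => zero_le_one) y)
  have hint : ∀ i, Integrable (fun y => c i * (A i).indicator 1 y) μ := fun i =>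
    ((integrable_const 1).indicator (hA i)).const_mul (c i)
  have hBint : ∫ y, B y ∂μ ≤ C * δ := by
    simp only [B, C, integral_finsetSum _ fun i _ => hint i, integral_const_mul,
      integral_indicator_one (hA _), Finset.sum_mul]
    exact Finset.sum_le_sum fun i _ => mul_le_mul_of_nonneg_left (hAδ i) (hc i)
  calc ∫ y, S y ^ 2 ∂μ ≤ ∫ y, (a ^ 2 + (2 * a + C) * B y) ∂μ := by
        refine integral_mono_of_nonneg (ae_of_all _ fun y => sq_nonneg _)
          ((integrable_const _).add ((integrable_finsetSum _ fun i _ => hint i).const_mul _))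
          (ae_of_all _ fun y => ?_)
        nlinarith [hS0 y, hS y, hB0 y, hBC y]
    _ = a ^ 2 + (2 * a + C) * ∫ y, B y ∂μ := by
        rw [integral_add (integrable_const _)
          ((integrable_finsetSum _ fun i _ => hint i).const_mul _), integral_const_mul]
        simp [B]
    _ ≤ a ^ 2 + (2 * a + C) * (C * δ) := by
        gcongr
        linarith [Finset.sum_nonneg fun i (_ : i ∈ Finset.univ) => hc i]

instance (m : ℕ) (ν : Measure ℝ) [IsProbabilityMeasure ν] :
    IsProbabilityMeasure (piNu m ν) := by
  unfold piNu
  infer_instance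

section HFk

variable {m : ℕ} {h : (Fin m → ℝ) → ℝ} {ν : Measure ℝ}

lemma HFk_nonneg (t : ℝ) : 0 ≤ HFk m h ν t := measureReal_nonneg

variable [IsProbabilityMeasure ν]

lemma HFk_le_one (t : ℝ) : HFk m h ν t ≤ 1 := measureReal_le_one

lemma HFk_monotone : Monotone (HFk m h ν) := fun _ _ hab =>
  measureReal_mono fun _ hy => le_trans hy hab

lemma measureReal_abs_sub_le_le_of_density (hmeas : Measurable h) {hF : ℝ → ℝ}
    (hdens : ∀ t, HFk m h ν t = ∫ x in Iic t, hF x) {D : ℝ} (hD : ∀ x, hF x ≤ D) (hD0 : 0 ≤ D)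
    (q : ℝ) {r : ℝ} (hr : 0 < r) :
    (piNu m ν).real {y | |h y - q| ≤ r} ≤ 3 * D * r :=
  -- `{h < q - r}` is not a sublevel set `{h ≤ t}`, so the lower cut is taken at `q - 2r`
  calc (piNu m ν).real {y | |h y - q| ≤ r} ≤ HFk m h ν (q + r) - HFk m h ν (q - 2 * r) :=
        measureReal_abs_sub_le_le_sub _ hmeas hr.le (by linarith)
    _ ≤ D * (q + r - (q - 2 * r)) :=
        sub_le_mul_of_eq_setIntegral_Iic hdens hD hD0 (HFk_nonneg _) (by linarith)
    _ = 3 * D * r := by ring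

lemma abs_Aker_sub_le {J : ℝ → ℝ} {M : ℝ} (hM : ∀ t, |J t| ≤ M)
    (hJint : Integrable fun y => J (HFk m h ν y)) {d : ℕ} (aa pp : Fin d → ℝ) (hF : ℝ → ℝ)
    {x y : Fin m → ℝ} {r : ℝ} (hxy : |h x - h y| ≤ r) :
    |Aker m h ν J d aa pp hF x - Aker m h ν J d aa pp hF y| ≤
      M * r + ∑ i, |aa i / hF (qf (HFk m h ν) (pp i))| *
        {z | |h z - qf (HFk m h ν) (pp i)| ≤ r}.indicator 1 y := by
  set q := fun i => qf (HFk m h ν) (pp i)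
  have hφψ : Integrable fun t => HFk m h ν t * J (HFk m h ν t) :=
    hJint.bdd_mul HFk_monotone.measurable.aestronglyMeasurable
      (c := 1) (ae_of_all _ fun t => by
        rw [Real.norm_eq_abs, abs_of_nonneg (HFk_nonneg t)]
        exact HFk_le_one t)
  have hsplit : Aker m h ν J d aa pp hF x - Aker m h ν J d aa pp hF y =
      ((∫ t, ((if h y ≤ t then 1 else 0) - HFk m h ν t) * J (HFk m h ν t)) -
        ∫ t, ((if h x ≤ t then 1 else 0) - HFk m h ν t) * J (HFk m h ν t)) +
      ∑ i, aa i / hF (q i) * ((if h y ≤ q i then 1 else 0) - if h x ≤ q i then 1 else 0) := by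
    rw [Aker, Aker, add_sub_add_comm, ← Finset.sum_sub_distrib]
    congr 1
    · ring
    · refine Finset.sum_congr rfl fun i _ => ?_
      ring
  have hyx : |h y - h x| ≤ r := by rwa [abs_sub_comm]
  rw [hsplit]
  refine (abs_add_le _ _).trans (add_le_add ?_ ?_)
  · exact (abs_integral_step_sub_integral_step_le hJint hφψ (fun t => hM _) _ _).trans
      (mul_le_mul_of_nonneg_left hyx ((abs_nonneg _).trans (hM 0)))
  · refine (Finset.abs_sum_le_sum_abs _ _).trans (Finset.sum_le_sum fun i _ => ?_)
    rw [abs_mul]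
    refine mul_le_mul_of_nonneg_left ?_ (abs_nonneg _)
    simpa [indicator_apply] using abs_step_sub_step_le (q := q i) hyx

lemma iSup_abs_Aker_sub_le {K : ℝ} (hLip : ∀ x y, |h x - h y| ≤ K * eudist x y) (hK : 0 ≤ K)
    {J : ℝ → ℝ} {M : ℝ} (hM : ∀ t, |J t| ≤ M) (hJint : Integrable fun y => J (HFk m h ν y))
    {d : ℕ} (aa pp : Fin d → ℝ) (hF : ℝ → ℝ) {ε : ℝ} (hε : 0 ≤ ε) (y : Fin m → ℝ) :
    (⨆ x ∈ {x : Fin m → ℝ | eudist x y ≤ ε},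
        |Aker m h ν J d aa pp hF x - Aker m h ν J d aa pp hF y|) ≤
      M * (K * ε) + ∑ i, |aa i / hF (qf (HFk m h ν) (pp i))| *
        {z | |h z - qf (HFk m h ν) (pp i)| ≤ K * ε}.indicator 1 y := by
  have hbound : ∀ x, eudist x y ≤ ε → |Aker m h ν J d aa pp hF x - Aker m h ν J d aa pp hF y| ≤
      M * (K * ε) + ∑ i, |aa i / hF (qf (HFk m h ν) (pp i))| *
        {z | |h z - qf (HFk m h ν) (pp i)| ≤ K * ε}.indicator 1 y := fun x hx =>
    abs_Aker_sub_le hM hJint aa pp hF ((hLip x y).trans (by gcongr))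
  have hb0 := (abs_nonneg _).trans (hbound y (by simp [eudist, hε]))
  exact Real.iSup_le (fun x => Real.iSup_le (hbound x) hb0) hb0

end HFk

theorem stmt_15_general
    (m : ℕ)
    (h : (Fin m → ℝ) → ℝ)
    (ν : Measure ℝ) [IsProbabilityMeasure ν]
    -- `h` Lipschitz continuous
    (K : ℝ) (hLip : ∀ x y, |h x - h y| ≤ K * eudist x y)
    -- `H_F` has a bounded density `h_F`
    (hF : ℝ → ℝ)
    (hdens : ∀ t, HFk m h ν t = ∫ x in Set.Iic t, hF x)
    (hFbdd : ∃ D, ∀ x, hF x ≤ D)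
    -- `J` bounded, vanishing outside `[α,β] ⊂ (0,1)`, with `∫ |J(H_F(y))| dy < ∞`
    (J : ℝ → ℝ)
    (hJbdd : ∃ M, ∀ t, |J t| ≤ M)
    (hJint : Integrable (fun y : ℝ => J (HFk m h ν y)))
    -- quantile part parameters with `h_F(H_F⁻¹(p_i)) > 0`
    (d : ℕ) (aa pp : Fin d → ℝ) :
    ∃ L' ε₀ : ℝ, 0 < ε₀ ∧ ∀ ε ∈ Set.Ioo (0 : ℝ) ε₀,
      ∫ y : Fin m → ℝ,
        (⨆ x ∈ {x : Fin m → ℝ | eudist x y ≤ ε},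
          |Aker m h ν J d aa pp hF x - Aker m h ν J d aa pp hF y|) ^ 2 ∂piNu m ν
        ≤ L' * ε := by
  obtain ⟨D, hD⟩ := hFbdd
  obtain ⟨M, hM⟩ := hJbdd
  have hM0 : 0 ≤ M := (abs_nonneg _).trans (hM 0)
  set K' := max K 1
  set D' := max D 0
  set C := ∑ i, |aa i / hF (qf (HFk m h ν) (pp i))|
  have hK' : 0 < K' := lt_max_of_lt_right one_pos
  have hLip' : ∀ x y, |h x - h y| ≤ K' * eudist x y := fun x y =>
    (hLip x y).trans (mul_le_mul_of_nonneg_right (le_max_left _ _) (Real.sqrt_nonneg _))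
  have hmeas : Measurable h := (continuous_of_abs_sub_le_mul_eudist hLip).measurable
  refine ⟨M ^ 2 * K' ^ 2 + (2 * M * K' + C) * (C * (3 * D' * K')), 1, one_pos, ?_⟩
  rintro ε ⟨hε0, hε1⟩
  calc _ ≤ (M * (K' * ε)) ^ 2 + (2 * (M * (K' * ε)) + C) * (C * (3 * D' * (K' * ε))) :=
        integral_sq_le_of_le_add_sum_indicator (by positivity) (fun i => abs_nonneg _)
          (fun i => measurableSet_le (hmeas.sub measurable_const).abs measurable_const)
          (fun i => measureReal_abs_sub_le_le_of_density hmeas hdens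
            (fun x => (hD x).trans (le_max_left _ _)) (le_max_right _ _) _ (mul_pos hK' hε0))
          (fun y => Real.iSup_nonneg fun x => Real.iSup_nonneg fun _ => abs_nonneg _)
          (iSup_abs_Aker_sub_le hLip' hK'.le hM hJint aa pp hF hε0.le)
    _ ≤ _ := by
        have hε2 : ε ^ 2 ≤ ε := by nlinarith
        linear_combination (M ^ 2 * K' ^ 2 + 6 * M * K' ^ 2 * C * D') * hε2

/-- the kernel `A` of the GL-linearization satisfies the
L₂-variation condition. -/
theorem stmt_15
    (m : ℕ) (hm : 2 ≤ m)
    (h : (Fin m → ℝ) → ℝ)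
    (ν : Measure ℝ) [IsProbabilityMeasure ν]
    -- `h` Lipschitz continuous
    (K : ℝ) (hLip : ∀ x y, |h x - h y| ≤ K * eudist x y)
    -- `H_F` has a bounded density `h_F`
    (hF : ℝ → ℝ) (hFmeas : Measurable hF)
    (hdens : ∀ t, HFk m h ν t = ∫ x in Set.Iic t, hF x)
    (hFbdd : ∃ D, ∀ x, hF x ≤ D)
    -- `J` bounded, vanishing outside `[α,β] ⊂ (0,1)`, with `∫ |J(H_F(y))| dy < ∞`
    (J : ℝ → ℝ) (α β : ℝ) (hα : 0 < α) (hαβ : α < β) (hβ1 : β < 1)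
    (hJ0 : ∀ t, t ∉ Set.Icc α β → J t = 0)
    (hJbdd : ∃ M, ∀ t, |J t| ≤ M)
    (hJint : Integrable (fun y : ℝ => J (HFk m h ν y)))
    -- quantile part parameters with `h_F(H_F⁻¹(p_i)) > 0`
    (d : ℕ) (aa pp : Fin d → ℝ) (hpp : ∀ i, pp i ∈ Set.Ioo (0:ℝ) 1)
    (hFq : ∀ i, 0 < hF (qf (HFk m h ν) (pp i))) :
    ∃ L' ε₀ : ℝ, 0 < ε₀ ∧ ∀ ε ∈ Set.Ioo (0 : ℝ) ε₀,
      ∫ y : Fin m → ℝ,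
        (⨆ x ∈ {x : Fin m → ℝ | eudist x y ≤ ε},
          |Aker m h ν J d aa pp hF x - Aker m h ν J d aa pp hF y|) ^ 2 ∂piNu m ν
        ≤ L' * ε :=
  stmt_15_general m h ν K hLip hF hdens hFbdd J hJbdd hJint d aa pp
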